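/- Let (J_n, X_n) be a Markov renewal process on finite X, and let 0 ≠ k ∈ X with p_{kk} < 1. Then the reduced semi-Markov kernel _kQ_{ij}(t) = Q_{ij}(t) + Σ_{n=0}^∞ (Q_{ik} * Q_{kk}^{*n} * Q_{kj})(t) defines, for each i, a probability distribution concentrated on (X \ {k}) × [0,∞): Σ_{j ≠ k} _kQ_{ij}(∞) = 1. -/

import Mathlib

/-!
A path `i → k → ⋯ → k → j` with `n` loops at `k` carries total mass `Q_{ik} p_{kk}^n Q_{kj}`,
so the geometric series gives `ₖQ_{ij}(∞) = Q_{ij}(∞) + Q_{ik}(∞) (1 - p_{kk})⁻¹ Q_{kj}(∞)`.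
Summing over `j ≠ k`, the row condition at `k` turns `∑_{j ≠ k} Q_{kj}(∞)` into `1 - p_{kk}`,
which cancels the factor `(1 - p_{kk})⁻¹` and leaves the row sum of `Q` at `i`.
-/

open MeasureTheory ENNReal

/-- Convolution of two (possibly improper) distributions on `ℝ`, i.e. the image of the
product measure under addition. -/
noncomputable def mconv (ν₁ ν₂ : Measure ℝ) : Measure ℝ :=
  Measure.map (fun p : ℝ × ℝ => p.1 + p.2) (ν₁.prod ν₂)

/-- `n`-fold convolution power `ν^{*n}` (with `ν^{*0} = δ₀`). -/
noncomputable def mconvIter (ν : Measure ℝ) : ℕ → Measure ℝ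
  | 0 => Measure.dirac 0
  | n + 1 => mconv (mconvIter ν n) ν

open Set Finset

section Convolution

variable (ν₁ ν₂ ν : Measure ℝ)

instance mconv.instSFinite [SFinite ν₁] [SFinite ν₂] : SFinite (mconv ν₁ ν₂) := by
  unfold mconv
  infer_instance

lemma mconv_apply_univ [SFinite ν₂] : mconv ν₁ ν₂ univ = ν₁ univ * ν₂ univ := by
  rw [mconv, Measure.map_apply (by fun_prop) MeasurableSet.univ, preimage_univ,
    ← univ_prod_univ, Measure.prod_prod]

instance mconvIter.instSFinite [SFinite ν] : ∀ n, SFinite (mconvIter ν n)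
  | 0 => by rw [mconvIter]; infer_instance
  | n + 1 => by
    have := mconvIter.instSFinite n
    rw [mconvIter]
    infer_instance

lemma mconvIter_apply_univ [SFinite ν] (n : ℕ) : mconvIter ν n univ = ν univ ^ n := by
  induction n with
  | zero => simp [mconvIter]
  | succ n ih => rw [mconvIter, mconv_apply_univ, ih, pow_succ]

end Convolution

lemma isFiniteMeasure_of_sum_apply_univ_eq_one {α ι : Type*} [MeasurableSpace α] [Fintype ι]
    {μ : ι → Measure α} (h : ∑ j, μ j univ = 1) (j : ι) : IsFiniteMeasure (μ j) where
  measure_univ_lt_top := calc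
    μ j univ ≤ ∑ j, μ j univ := single_le_sum (f := fun j => μ j univ) (fun _ _ => zero_le) (mem_univ j)
    _ = 1 := h
    _ < ⊤ := one_lt_top

section ReducedKernel

variable {ι : Type*} (Q : ι → ι → Measure ℝ) (k : ι)

/-- The kernel `ₖQ` of the process observed only outside `k`. -/
noncomputable def reducedKernel (i j : ι) : Measure ℝ :=
  Q i j + Measure.sum fun n : ℕ => mconv (mconv (Q i k) (mconvIter (Q k k) n)) (Q k j)

lemma reducedKernel_apply_univ (i j : ι) [SFinite (Q k k)] [SFinite (Q k j)] :
    reducedKernel Q k i j univ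
      = Q i j univ + Q i k univ * (1 - Q k k univ)⁻¹ * Q k j univ := by
  have hloops (n : ℕ) : mconv (mconv (Q i k) (mconvIter (Q k k) n)) (Q k j) univ
      = Q i k univ * Q k j univ * Q k k univ ^ n := by
    rw [mconv_apply_univ, mconv_apply_univ, mconvIter_apply_univ]
    ring
  rw [reducedKernel, Measure.add_apply, Measure.sum_apply _ MeasurableSet.univ]
  simp only [hloops, ENNReal.tsum_mul_left, ENNReal.tsum_geometric]
  ring

lemma sum_erase_reducedKernel_apply_univ [Fintype ι] [DecidableEq ι]
    (hrow : ∀ i, ∑ j, Q i j univ = 1) (hpkk : Q k k univ < 1) (i : ι) :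
    ∑ j ∈ univ.erase k, reducedKernel Q k i j univ = 1 := by
  have := fun a => isFiniteMeasure_of_sum_apply_univ_eq_one (hrow a)
  have hpkk_ne_top : Q k k univ ≠ ⊤ := (hpkk.trans one_lt_top).ne
  have hexit : ∑ j ∈ univ.erase k, Q k j univ = 1 - Q k k univ :=
    (ENNReal.sub_eq_of_eq_add hpkk_ne_top <| by
      rw [add_comm, add_sum_erase _ (fun j => Q k j univ) (mem_univ k), hrow k]).symm
  calc ∑ j ∈ univ.erase k, reducedKernel Q k i j univ
      = ∑ j ∈ univ.erase k, Q i j univ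
          + Q i k univ * (1 - Q k k univ)⁻¹ * ∑ j ∈ univ.erase k, Q k j univ := by
        simp only [reducedKernel_apply_univ, sum_add_distrib, mul_sum]
    _ = ∑ j ∈ univ.erase k, Q i j univ + Q i k univ := by
        rw [hexit, mul_assoc, ENNReal.inv_mul_cancel (tsub_pos_of_lt hpkk).ne'
          (sub_ne_top one_ne_top), mul_one]
    _ = 1 := by rw [sum_erase_add _ _ (mem_univ k), hrow i]

end ReducedKernel

theorem reduced_kernel_total_mass_one_general {m : ℕ}
    (Q : Fin (m + 1) → Fin (m + 1) → Measure ℝ)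
    (hrow : ∀ i, ∑ j, Q i j Set.univ = 1)
    (k : Fin (m + 1))
    (hpkk : Q k k Set.univ < 1) :
    ∀ i, ∑ j ∈ Finset.univ.erase k,
      (Q i j + Measure.sum (fun n : ℕ =>
        mconv (mconv (Q i k) (mconvIter (Q k k) n)) (Q k j))) Set.univ = 1 :=
  sum_erase_reducedKernel_apply_univ Q k hrow hpkk

/-- For a Markov renewal process with semi-Markov kernel `Q_{ij}` (here
`Q i j` is the measure with distribution function `Q_{ij}(t)`), a state `k ≠ 0` with
`p_{kk} = Q_{kk}(∞) < 1`, the reduced kernel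
`ₖQ_{ij} = Q_{ij} + ∑_{n≥0} Q_{ik} * Q_{kk}^{*n} * Q_{kj}` defines, for each `i`, a
probability distribution concentrated on `(X \ {k}) × [0,∞)`:
`∑_{j ≠ k} ₖQ_{ij}(∞) = 1`. -/
theorem reduced_kernel_total_mass_one {m : ℕ}
    (Q : Fin (m + 1) → Fin (m + 1) → Measure ℝ)
    (hQsupp : ∀ i j, Q i j {t | t < 0} = 0)
    (hrow : ∀ i, ∑ j, Q i j Set.univ = 1)
    (k : Fin (m + 1)) (hk : k ≠ 0)
    (hpkk : Q k k Set.univ < 1) :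
    ∀ i, ∑ j ∈ Finset.univ.erase k,
      (Q i j + Measure.sum (fun n : ℕ =>
        mconv (mconv (Q i k) (mconvIter (Q k k) n)) (Q k j))) Set.univ = 1 :=
  reduced_kernel_total_mass_one_general Q hrow k hpkk
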